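/- Let A, B ⊆ R^d be closed convex cones with A ∩ B ≠ ∅. Then Fix T_DR = {0} if and only if A ∩ B = {0} and A − B = R^d. -/

import Mathlib

/-!
A point `x` is fixed by the Douglas–Rachford operator iff `P_B (2 P_A x - x) = P_A x`, so every
point of `A ∩ B` is fixed and every fixed point has `P_A x ∈ A ∩ B`. For cones, `P_A x = 0` means
`-x` lies in the dual cone of `A`, and the fixed points with `P_A x = 0` are exactly the `x` with
`-x` in the dual cone of `A - B`. Hence `Fix T = {0}` forces `A ∩ B = {0}` and a trivial dual of
`A - B`; by Farkas' lemma the convex cone `A - B` is then dense, and a dense convex set in finite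
dimensions is the whole space. Conversely, if `A ∩ B = {0}` and `A - B = ℝ^d`, a fixed point has
`P_A x = 0`, so `-x` lies in the dual of the whole space, which is `{0}`.
-/

open Set ProperCone
open scoped Pointwise
open scoped RealInnerProductSpace

def ConvexCone.ofConvex {𝕜 M : Type*} [Field 𝕜] [LinearOrder 𝕜] [IsStrictOrderedRing 𝕜]
    [AddCommGroup M] [Module 𝕜 M] (s : Set M) (hs : Convex 𝕜 s)
    (hcone : ∀ x ∈ s, ∀ t : 𝕜, 0 < t → t • x ∈ s) : ConvexCone 𝕜 M where
  carrier := s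
  smul_mem' _ hc _ hx := hcone _ hx _ hc
  add_mem' x hx y hy := by
    have hmid : (1 / 2 : 𝕜) • x + (1 / 2 : 𝕜) • y ∈ s :=
      hs hx hy (by norm_num) (by norm_num) (by norm_num)
    convert hcone _ hmid 2 two_pos using 1
    module

def IsMetricProjection {E : Type*} [NormedAddCommGroup E] (S : Set E) (x p : E) : Prop :=
  p ∈ S ∧ ∀ w ∈ S, ‖x - p‖ ≤ ‖x - w‖

theorem IsMetricProjection.eq_of_mem {E : Type*} [NormedAddCommGroup E] {S : Set E} {x p : E}
    (h : IsMetricProjection S x p) (hx : x ∈ S) : p = x := by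
  simpa [sub_eq_zero, eq_comm] using h.2 x hx

section InnerProduct

variable {E : Type*} [NormedAddCommGroup E] [InnerProductSpace ℝ E]

namespace IsMetricProjection

variable {S : Set E} {x p : E}

theorem inner_sub_nonpos (h : IsMetricProjection S x p) (hS : Convex ℝ S) :
    ∀ w ∈ S, ⟪x - p, w - p⟫ ≤ 0 := by
  have : Nonempty S := ⟨⟨p, h.1⟩⟩
  have hbdd : BddBelow (range fun w : S => ‖x - w‖) := ⟨0, by rintro _ ⟨w, rfl⟩; positivity⟩
  exact (norm_eq_iInf_iff_real_inner_le_zero hS h.1).mp <|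
    le_antisymm (le_ciInf fun w => h.2 w w.2) (ciInf_le hbdd ⟨p, h.1⟩)

variable [CompleteSpace E]

theorem eq_zero_iff (h : IsMetricProjection S x p) (hS : Convex ℝ S) (h0 : (0 : E) ∈ S) :
    p = 0 ↔ -x ∈ innerDual S := by
  constructor
  · rintro rfl w hw
    simpa [inner_neg_right, real_inner_comm] using h.inner_sub_nonpos hS w hw
  · intro hx
    have hp0 := h.inner_sub_nonpos hS 0 h0
    have hxp : 0 ≤ ⟪p, -x⟫ := hx h.1
    rw [inner_neg_right, real_inner_comm] at hxp
    rw [zero_sub, inner_neg_right, inner_sub_left] at hp0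
    exact real_inner_self_nonpos.mp (by linarith)

end IsMetricProjection

variable [CompleteSpace E]

theorem ProperCone.mem_innerDual_sub_iff {s t : Set E} {y : E} (hs : (0 : E) ∈ s)
    (ht : (0 : E) ∈ t) :
    y ∈ innerDual (s - t) ↔ y ∈ innerDual s ∧ -y ∈ innerDual t := by
  constructor
  · intro h
    refine ⟨fun a ha => ?_, fun b hb => ?_⟩
    · simpa using h (sub_mem_sub ha ht)
    · simpa [inner_neg_right] using h (sub_mem_sub hs hb)
  · rintro ⟨hs', ht'⟩ _ ⟨a, ha, b, hb, rfl⟩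
    have hb' : 0 ≤ ⟪b, -y⟫ := ht' hb
    have ha' : 0 ≤ ⟪a, y⟫ := hs' ha
    show 0 ≤ ⟪a - b, y⟫
    rw [inner_neg_right] at hb'
    rw [inner_sub_left]
    linarith

theorem ConvexCone.closure_eq_univ_of_innerDual_eq_bot (K : ConvexCone ℝ E)
    (hK : (K : Set E).Nonempty) (h : innerDual (K : Set E) = ⊥) : closure (K : Set E) = univ := by
  lift K.closure to ProperCone ℝ E using ⟨hK.closure, by simp [isClosed_closure]⟩ with L hL
  have hLK : (L : Set E) = closure K := by rw [← ConvexCone.coe_closure, ← hL]; rfl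
  refine eq_univ_of_forall fun v => by_contra fun hv => ?_
  obtain ⟨y, hyL, hvy⟩ := L.hyperplane_separation' (x₀ := v) (by rwa [← SetLike.mem_coe, hLK])
  have hy : y ∈ innerDual (K : Set E) := fun x hx =>
    hyL x (by rw [← SetLike.mem_coe, hLK]; exact subset_closure hx)
  rw [h, mem_bot] at hy
  simp [hy] at hvy

end InnerProduct

theorem Convex.eq_univ_of_closure_eq_univ {E : Type*} [NormedAddCommGroup E] [NormedSpace ℝ E]
    [FiniteDimensional ℝ E] {s : Set E} (hs : Convex ℝ s) (h : closure s = univ) : s = univ := by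
  have hspan : affineSpan ℝ s = ⊤ := by
    refine eq_top_iff.mpr fun x _ => ?_
    have := closure_minimal (subset_affineSpan ℝ s) (affineSpan ℝ s).closed_of_finiteDimensional
    exact this (h ▸ mem_univ x)
  have hint := hs.interior_nonempty_iff_affineSpan_eq_top.mpr hspan
  refine eq_univ_of_univ_subset ?_
  calc univ = interior (closure s) := by rw [h, interior_univ]
    _ = interior s := hs.interior_closure_eq_interior_of_nonempty_interior hint
    _ ⊆ s := interior_subset

/-- `½ (Id + R_B ∘ R_A)` with the reflections `R_C = 2 P_C - Id`. -/
noncomputable def douglasRachford {E : Type*} [AddCommGroup E] [Module ℝ E] (PA PB : E → E)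
    (x : E) : E :=
  (1 / 2 : ℝ) • (x + ((2 : ℝ) • PB ((2 : ℝ) • PA x - x) - ((2 : ℝ) • PA x - x)))

theorem douglasRachford_eq_self_iff {E : Type*} [AddCommGroup E] [Module ℝ E] {PA PB : E → E}
    {x : E} : douglasRachford PA PB x = x ↔ PB ((2 : ℝ) • PA x - x) = PA x := by
  unfold douglasRachford
  constructor
  · intro h
    refine smul_right_injective E (two_ne_zero (α := ℝ)) ?_
    linear_combination (norm := module) (2 : ℝ) • h
  · intro h
    rw [h]
    module

section DouglasRachford

variable {E : Type*} [NormedAddCommGroup E] [InnerProductSpace ℝ E] {A B : Set E} {PA PB : E → E}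
  {x : E}

theorem douglasRachford_eq_self_of_mem_inter (hPA : ∀ x, IsMetricProjection A x (PA x))
    (hPB : ∀ x, IsMetricProjection B x (PB x)) (hx : x ∈ A ∩ B) : douglasRachford PA PB x = x := by
  have hPAx : PA x = x := (hPA x).eq_of_mem hx.1
  rw [douglasRachford_eq_self_iff, hPAx, two_smul, add_sub_cancel_right]
  exact (hPB x).eq_of_mem hx.2

theorem proj_mem_inter_of_douglasRachford_eq_self (hPA : ∀ x, IsMetricProjection A x (PA x))
    (hPB : ∀ x, IsMetricProjection B x (PB x)) (hx : douglasRachford PA PB x = x) :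
    PA x ∈ A ∩ B :=
  ⟨(hPA x).1, douglasRachford_eq_self_iff.mp hx ▸ (hPB _).1⟩

theorem douglasRachford_eq_self_and_proj_eq_zero_iff [CompleteSpace E]
    (hPA : ∀ x, IsMetricProjection A x (PA x)) (hPB : ∀ x, IsMetricProjection B x (PB x))
    (hA : Convex ℝ A) (hB : Convex ℝ B) (h0A : (0 : E) ∈ A) (h0B : (0 : E) ∈ B) :
    douglasRachford PA PB x = x ∧ PA x = 0 ↔ -x ∈ innerDual (A - B) := by
  have hPBx := (hPB (-x)).eq_zero_iff hB h0B
  rw [neg_neg] at hPBx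
  rw [mem_innerDual_sub_iff h0A h0B, neg_neg, ← (hPA x).eq_zero_iff hA h0A, ← hPBx,
    douglasRachford_eq_self_iff]
  refine ⟨fun ⟨h, hp⟩ => ⟨hp, ?_⟩, fun ⟨hp, h⟩ => ⟨?_, hp⟩⟩ <;> simpa [hp] using h

end DouglasRachford

theorem stmt9_general {d : ℕ} (A B : Set (EuclideanSpace ℝ (Fin d)))
    (hAclosed : IsClosed A) (hAconv : Convex ℝ A)
    (hBclosed : IsClosed B) (hBconv : Convex ℝ B)
    (hAcone : ∀ x ∈ A, ∀ t : ℝ, 0 < t → t • x ∈ A)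
    (hBcone : ∀ x ∈ B, ∀ t : ℝ, 0 < t → t • x ∈ B)
    (PA PB T : EuclideanSpace ℝ (Fin d) → EuclideanSpace ℝ (Fin d))
    (hPA : ∀ x, PA x ∈ A ∧ ∀ w ∈ A, ‖x - PA x‖ ≤ ‖x - w‖)
    (hPB : ∀ x, PB x ∈ B ∧ ∀ w ∈ B, ‖x - PB x‖ ≤ ‖x - w‖)
    (hT : ∀ x, T x = (1 / 2 : ℝ) •
      (x + ((2 : ℝ) • PB ((2 : ℝ) • PA x - x) - ((2 : ℝ) • PA x - x)))) :
    {x | T x = x} = {0} ↔ A ∩ B = {0} ∧ A - B = Set.univ := by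
  obtain rfl : T = douglasRachford PA PB := funext hT
  have h0A : (0 : EuclideanSpace ℝ (Fin d)) ∈ A :=
    ConvexCone.Pointed.of_nonempty_of_isClosed (C := .ofConvex A hAconv hAcone)
      ⟨_, (hPA 0).1⟩ hAclosed
  have h0B : (0 : EuclideanSpace ℝ (Fin d)) ∈ B :=
    ConvexCone.Pointed.of_nonempty_of_isClosed (C := .ofConvex B hBconv hBcone)
      ⟨_, (hPB 0).1⟩ hBclosed
  have hfix_iff (x : EuclideanSpace ℝ (Fin d)) :=
    douglasRachford_eq_self_and_proj_eq_zero_iff (x := x) hPA hPB hAconv hBconv h0A h0B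
  constructor
  · intro hFix
    have hfix_eq_zero (x) (hx : douglasRachford PA PB x = x) : x = 0 := hFix.subset hx
    refine ⟨eq_singleton_iff_unique_mem.mpr ⟨⟨h0A, h0B⟩,
      fun z hz => hfix_eq_zero z (douglasRachford_eq_self_of_mem_inter hPA hPB hz)⟩, ?_⟩
    have hdual : innerDual (A - B) = ⊥ := eq_bot_iff.mpr fun y hy =>
      neg_eq_zero.mp (hfix_eq_zero _ ((hfix_iff _).mpr (by rwa [neg_neg])).1)
    have hcone : ∀ c ∈ A - B, ∀ t : ℝ, 0 < t → t • c ∈ A - B := by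
      rintro _ ⟨a, ha, b, hb, rfl⟩ t ht
      rw [smul_sub]
      exact sub_mem_sub (hAcone a ha t ht) (hBcone b hb t ht)
    exact (hAconv.sub hBconv).eq_univ_of_closure_eq_univ
      ((ConvexCone.ofConvex _ (hAconv.sub hBconv) hcone).closure_eq_univ_of_innerDual_eq_bot
        ⟨_, sub_mem_sub h0A h0B⟩ hdual)
  · rintro ⟨hAB, hsub⟩
    refine eq_singleton_iff_unique_mem.mpr
      ⟨douglasRachford_eq_self_of_mem_inter hPA hPB ⟨h0A, h0B⟩, fun x hx => ?_⟩
    have hp : PA x = 0 := by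
      simpa [hAB] using proj_mem_inter_of_douglasRachford_eq_self hPA hPB hx
    simpa [hsub] using (hfix_iff x).mp ⟨hx, hp⟩

/-- For closed convex cones `A, B ⊆ ℝ^d` with `A ∩ B ≠ ∅` and the Douglas–Rachford
operator `T_DR`, one has `Fix T_DR = {0}` iff `A ∩ B = {0}` and `A - B = ℝ^d`. -/
theorem stmt9 {d : ℕ} (A B : Set (EuclideanSpace ℝ (Fin d)))
    (hAclosed : IsClosed A) (hAconv : Convex ℝ A)
    (hBclosed : IsClosed B) (hBconv : Convex ℝ B)
    (hAcone : ∀ x ∈ A, ∀ t : ℝ, 0 < t → t • x ∈ A)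
    (hBcone : ∀ x ∈ B, ∀ t : ℝ, 0 < t → t • x ∈ B)
    (hAB : (A ∩ B).Nonempty)
    (PA PB T : EuclideanSpace ℝ (Fin d) → EuclideanSpace ℝ (Fin d))
    (hPA : ∀ x, PA x ∈ A ∧ ∀ w ∈ A, ‖x - PA x‖ ≤ ‖x - w‖)
    (hPB : ∀ x, PB x ∈ B ∧ ∀ w ∈ B, ‖x - PB x‖ ≤ ‖x - w‖)
    (hT : ∀ x, T x = (1 / 2 : ℝ) •
      (x + ((2 : ℝ) • PB ((2 : ℝ) • PA x - x) - ((2 : ℝ) • PA x - x)))) :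
    {x | T x = x} = {0} ↔ A ∩ B = {0} ∧ A - B = Set.univ :=
  stmt9_general A B hAclosed hAconv hBclosed hBconv hAcone hBcone PA PB T hPA hPB hT
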